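/- The subshift (Y_{1^∞}, S), where 1^∞ = (1,1,1,...) ∈ {0,1}^ℕ, is not minimal. -/

import Mathlib

open MeasureTheory Filter Topology
open scoped ENNReal

attribute [local instance] Classical.propDecidable

noncomputable section

/-- The shift map on bi-infinite sequences: `(S x) n = x (n+1)`. -/
def shift {α : Type*} (x : ℤ → α) : ℤ → α := fun n => x (n + 1)

/-- Shift by an arbitrary integer amount `m`. -/
def shiftZ {α : Type*} (m : ℤ) (x : ℤ → α) : ℤ → α := fun n => x (n + m)

/-- A run structure on a bi-infinite sequence `x`: `t k` is the starting index of the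
`k`-th maximal mono-symbol block of `x`, indexed so that block `0` contains position `0`. -/
structure RunStructure (x : ℤ → ℕ) where
  t : ℤ → ℤ
  mono : StrictMono t
  start_nonpos : t 0 ≤ 0
  start_pos : 0 < t 1
  const : ∀ k i : ℤ, t k ≤ i → i < t (k + 1) → x i = x (t k)
  alt : ∀ k : ℤ, x (t (k + 1)) ≠ x (t k)

/-- `d` is the run-length derivative of `x`: `d k` is the length of the `k`-th run. -/
def IsDelta (x d : ℤ → ℕ) : Prop :=
  ∃ r : RunStructure x, ∀ k : ℤ, (d k : ℤ) = r.t (k + 1) - r.t k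

/-- The run-length derivative operator `Δ` (junk value when no derivative exists). -/
def delta (x : ℤ → ℕ) : ℤ → ℕ :=
  if h : ∃ d, IsDelta x d then h.choose else fun _ => 0

/-- A bi-infinite sequence is smooth over `{1,3}` if all its iterated derivatives exist
and take values in `{1,3}`. -/
def SmoothSeq (x : ℤ → ℕ) : Prop :=
  ∀ k : ℕ, ∀ n : ℤ, delta^[k] x n = 1 ∨ delta^[k] x n = 3

/-- The set `X` of bi-infinite smooth sequences over `{1,3}`. -/
def SmoothX : Set (ℤ → ℕ) := {x | SmoothSeq x}

/-- The recoding alphabet: `A = 1`, `B = 3`, `C = 111`, `D = 333`. -/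
inductive ABCD : Type
  | A | B | C | D
deriving DecidableEq

instance : TopologicalSpace ABCD := ⊥
instance : DiscreteTopology ABCD := ⟨rfl⟩
instance : MeasurableSpace ABCD := ⊤

open ABCD

/-- The symbol (1 or 3) of the run encoded by a letter. -/
def sval : ABCD → ℕ
  | A => 1
  | B => 3
  | C => 1
  | D => 3

/-- The length (1 or 3) of the run encoded by a letter; this is also the value of `Δx`
at the corresponding position. -/
def lval : ABCD → ℕ
  | A => 1
  | B => 1
  | C => 3
  | D => 3

/-- `y` is the recoding of `x`: the letter `y k` encodes the `k`-th run of `x`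
(its symbol and its length). -/
def IsRecoding (x : ℤ → ℕ) (y : ℤ → ABCD) : Prop :=
  ∃ r : RunStructure x, ∀ k : ℤ,
    x (r.t k) = sval (y k) ∧ r.t (k + 1) - r.t k = (lval (y k) : ℤ)

/-- The recoding map `rec` (junk value when no recoding exists). -/
def recode (x : ℤ → ℕ) : ℤ → ABCD :=
  if h : ∃ y, IsRecoding x y then h.choose else fun _ => A

/-- The set `Y = rec(X)` of recodings of smooth sequences. -/
def SmoothY : Set (ℤ → ABCD) := recode '' SmoothX

/-- The derivative operator induced on recodings: since `(Δx) i = lval (rec x i)`,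
we have `Δ(rec x) = rec (Δ x) = recode (lval ∘ rec x)`. -/
def deltaY (y : ℤ → ABCD) : ℤ → ABCD := recode fun i => (lval (y i) : ℕ)

/-- `y` is well-aligned: the elementary block of `y` containing coordinate `0` starts
at position `0` (elementary blocks of `y` are exactly the runs of `Δx`, and
`(Δx) i = lval (y i)`). -/
def WellAligned (y : ℤ → ABCD) : Prop := lval (y (-1)) ≠ lval (y 0)

/-- `B_Y^L`: the set of `y ∈ Y` such that `y, Δy, ..., Δ^{L-1} y` are all well-aligned. -/
def BY (L : ℕ) : Set (ℤ → ABCD) :=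
  {y | y ∈ SmoothY ∧ ∀ l < L, WellAligned (deltaY^[l] y)}

/-- `Σ_y^L(n) = #{k ∈ [1,n] : S^k y ∈ B_Y^L}`. -/
def SigY (L : ℕ) (y : ℤ → ABCD) (n : ℕ) : ℕ :=
  ((Finset.Icc 1 n).filter fun k => shift^[k] y ∈ BY L).card

/-- `y` contains an elementary block in `{ABA, DCD}` (for `y ∈ Y`, any such factor is
automatically an elementary block). -/
def HasType0 (y : ℤ → ABCD) : Prop :=
  ∃ i : ℤ, (y i = A ∧ y (i + 1) = B ∧ y (i + 2) = A) ∨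
           (y i = D ∧ y (i + 1) = C ∧ y (i + 2) = D)

/-- `y` contains an elementary block in `{BAB, CDC}`. -/
def HasType1 (y : ℤ → ABCD) : Prop :=
  ∃ i : ℤ, (y i = B ∧ y (i + 1) = A ∧ y (i + 2) = B) ∨
           (y i = C ∧ y (i + 1) = D ∧ y (i + 2) = C)

/-- The type of a recoded sequence: `false` = type 0, `true` = type 1. -/
def typeOf (y : ℤ → ABCD) : Bool := decide (HasType1 y)

/-- The sequence of types of the successive derivatives of a smooth sequence `x`. -/
def TypesX (x : ℤ → ℕ) : ℕ → Bool := fun n => typeOf (recode (delta^[n] x))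

/-- The sequence of types of the successive derivatives of a recoded sequence `y`. -/
def TypesY (y : ℤ → ABCD) : ℕ → Bool := fun n => typeOf (deltaY^[n] y)

/-- `X_τ`: smooth bi-infinite sequences whose type sequence is exactly `τ`. -/
def Xset (τ : ℕ → Bool) : Set (ℤ → ℕ) := {x ∈ SmoothX | TypesX x = τ}

/-- `Y_τ = rec(X_τ)`. -/
def Yset (τ : ℕ → Bool) : Set (ℤ → ABCD) := recode '' Xset τ

/-- A sequence over `{A,B,C,D}` is alternating: no two consecutive symbols in `{A,C}`
and no two consecutive symbols in `{B,D}`. -/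
def Alternating (y : ℤ → ABCD) : Prop := ∀ n : ℤ, sval (y n) ≠ sval (y (n + 1))

/-- The substitutions `φ₀` and `φ₁` on letters. -/
def phiW : Bool → ABCD → List ABCD
  | false, A => [A]
  | false, B => [D]
  | false, C => [A, B, A]
  | false, D => [D, C, D]
  | true, A => [B]
  | true, B => [C]
  | true, C => [B, A, B]
  | true, D => [C, D, C]

/-- `z` is the image of the bi-infinite sequence `y` under the substitution `φ_t`, with
the convention that the image of the letter at position `0` starts at position `0`. -/
def IsSubst (t : Bool) (y z : ℤ → ABCD) : Prop :=
  ∃ u : ℤ → ℤ, u 0 = 0 ∧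
    (∀ k : ℤ, u (k + 1) = u k + (phiW t (y k)).length) ∧
    (∀ k : ℤ, ∀ j : Fin (phiW t (y k)).length, z (u k + (j : ℕ)) = (phiW t (y k)).get j)

/-- The substitution `φ_t` on bi-infinite sequences. -/
def substF (t : Bool) (y : ℤ → ABCD) : ℤ → ABCD :=
  if h : ∃ z, IsSubst t y z then h.choose else y

/-- The composition `φ_{τ₀} ∘ φ_{τ₁} ∘ ⋯ ∘ φ_{τ_{L-1}}`. -/
def substComp (τ : ℕ → Bool) : ℕ → (ℤ → ABCD) → (ℤ → ABCD)
  | 0 => id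
  | L + 1 => substF (τ 0) ∘ substComp (fun n => τ (n + 1)) L

/-- The homographies `h₀` and `h₁`. -/
def hmap : Bool → ℝ × ℝ → ℝ × ℝ
  | false, p => ((1 - p.1) / (3 - 2 * (p.1 + p.2)), (1 / 2 - p.1) / (3 - 2 * (p.1 + p.2)))
  | true, p => ((1 / 2 - p.1) / (3 - 2 * (p.1 + p.2)), (1 - p.1) / (3 - 2 * (p.1 + p.2)))

/-- The square `K = [0,1/2] × [0,1/2]`. -/
def Ksq : Set (ℝ × ℝ) := Set.Icc (0 : ℝ) (1 / 2) ×ˢ Set.Icc (0 : ℝ) (1 / 2)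

/-- The domain `E = {(a,b) ∈ K : a + b ≤ 3/4}`. -/
def Eset : Set (ℝ × ℝ) := {p ∈ Ksq | p.1 + p.2 ≤ 3 / 4}

/-- The composition `h_{t₀} ∘ h_{t₁} ∘ ⋯ ∘ h_{t_L}`. -/
def hComp (t : ℕ → Bool) : ℕ → (ℝ × ℝ → ℝ × ℝ)
  | 0 => hmap (t 0)
  | L + 1 => hComp t L ∘ hmap (t (L + 1))

/-- The point `(a(t), b(t))`, unique point of `⋂_L (h_{t₀} ∘ ⋯ ∘ h_{t_L})(E)`. -/
def abPoint (t : ℕ → Bool) : ℝ × ℝ :=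
  if h : ∃ p : ℝ × ℝ, (⋂ L : ℕ, hComp t L '' Eset) = {p} then h.choose else 0

/-- The number of occurrences of the letter `s` among positions `1, ..., m` of `z`. -/
def letterCount (s : ABCD) (z : ℤ → ABCD) (m : ℕ) : ℕ :=
  ((Finset.Icc 1 m).filter fun k => z (k : ℤ) = s).card

/-- `w` occurs as a factor of `y` at position `i`. -/
def IsFactorAt (w : List ABCD) (y : ℤ → ABCD) (i : ℤ) : Prop :=
  ∀ j : Fin w.length, y (i + (j : ℕ)) = w.get j

/-- The cylinder set `[w]` in `{1,3}^ℤ`. -/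
def cylX (w : List ℕ) : Set (ℤ → ℕ) :=
  {x | ∀ j : Fin w.length, x ((j : ℕ) : ℤ) = w.get j}

/-- The cylinder set `[w]` in `{A,B,C,D}^ℤ`. -/
def cylY (w : List ABCD) : Set (ℤ → ABCD) :=
  {y | ∀ j : Fin w.length, y ((j : ℕ) : ℤ) = w.get j}

/-- The number of occurrences of the finite word `w` in the prefix `x₀ ⋯ x_{n-1}`. -/
def occCount (x : ℤ → ℕ) (w : List ℕ) (n : ℕ) : ℕ :=
  ((Finset.range n).filter fun i =>
    i + w.length ≤ n ∧ ∀ j : Fin w.length, x (((i + (j : ℕ) : ℕ)) : ℤ) = w.get j).card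

/-- A subshift `Z` is minimal if it contains no nonempty proper closed shift-invariant
subset. -/
def ShiftMinimal {α : Type*} [TopologicalSpace α] (Z : Set (ℤ → α)) : Prop :=
  ∀ W : Set (ℤ → α), W ⊆ Z → W.Nonempty → IsClosed W → shift '' W = W → W = Z

/-!
Let `φ₁` be the substitution `A ↦ B, B ↦ C, C ↦ BAB, D ↦ CDC`, acting on bi-infinite sequences.
For an alternating `w`, the derivative of the `{1,3}`-sequence encoded by `φ₁ w` is the one
encoded by `w`, and `φ₁ (φ₁ w)` contains `BAB`; so a sequence which for every `n` is a shift of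
`φ₁ⁿ` of an alternating sequence lies in `Y_{1^∞}`.

For a closed set `V` of alternating sequences invariant under shifts and `φ₁`, the set of
sequences which for every `n` are a shift of some `φ₁ⁿ v`, `v ∈ V`, is shift-invariant, closed
(the shift can be taken in `[0, 3ⁿ)`, giving a finite union of compact sets) and, by compactness,
nonempty. Since `φ₁` creates `D` only from `D`, the choice `V = {D-free alternating sequences}`
gives a nonempty closed invariant subset of `Y_{1^∞}` in which `D` never occurs at the origin,
while `V = {alternating sequences}` yields a point of `Y_{1^∞}` with `D` at the origin, because
`D` occurs in `φ₁ D = CDC`.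
-/

instance : Fintype ABCD where
  elems := {A, B, C, D}
  complete x := by cases x <;> decide

lemma lval_pos (a : ABCD) : 0 < lval a := by cases a <;> decide

lemma lval_le_three (a : ABCD) : lval a ≤ 3 := by cases a <;> decide

lemma sval_eq_one_or_three (a : ABCD) : sval a = 1 ∨ sval a = 3 := by cases a <;> decide

lemma ABCD.ext_sval_lval {a b : ABCD} (hs : sval a = sval b) (hl : lval a = lval b) : a = b := by
  cases a <;> cases b <;> simp_all [sval, lval]

section Shift

variable {α : Type*}

@[simp]
lemma shiftZ_apply (m : ℤ) (x : ℤ → α) (n : ℤ) : shiftZ m x n = x (n + m) := rfl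

@[simp]
lemma shiftZ_zero (x : ℤ → α) : shiftZ 0 x = x := by
  funext n
  simp

lemma shiftZ_shiftZ (a b : ℤ) (x : ℤ → α) : shiftZ a (shiftZ b x) = shiftZ (a + b) x := by
  funext n
  simp [add_assoc]

lemma shift_eq_shiftZ_one (x : ℤ → α) : shift x = shiftZ 1 x := rfl

lemma image_shift_eq_of_shiftZ_mem {W : Set (ℤ → α)} (hW : ∀ z ∈ W, ∀ m, shiftZ m z ∈ W) :
    shift '' W = W := by
  ext z
  refine ⟨?_, fun hz => ⟨shiftZ (-1) z, hW z hz (-1), ?_⟩⟩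
  · rintro ⟨u, hu, rfl⟩
    exact hW u hu 1
  · rw [shift_eq_shiftZ_one, shiftZ_shiftZ]
    simp

end Shift

section StrictMonoInt

variable {t : ℤ → ℤ}

lemma StrictMono.sub_le_sub_int (ht : StrictMono t) {a b : ℤ} (hab : a ≤ b) :
    b - a ≤ t b - t a := by
  induction b, hab using Int.leInduction with
  | base => simp
  | succ n _ ih =>
    have := ht (lt_add_one n)
    omega

lemma StrictMono.exists_mem_Ico_int (ht : StrictMono t) (i : ℤ) :
    ∃ k, t k ≤ i ∧ i < t (k + 1) := by
  have h₁ := le_abs_self (i - t 0)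
  have h₂ := neg_abs_le (i - t 0)
  obtain ⟨k, hk, hmax⟩ := Int.exists_greatest_of_bdd (P := fun k => t k ≤ i)
    ⟨|i - t 0|, fun k hk => by
      by_contra! h
      have := ht.sub_le_sub_int (a := 0) (b := k) (by omega)
      omega⟩
    ⟨-|i - t 0|, by
      have := ht.sub_le_sub_int (a := -|i - t 0|) (b := 0) (by omega)
      omega⟩
  refine ⟨k, hk, not_le.1 fun h => ?_⟩
  have := hmax (k + 1) h
  omega

lemma StrictMono.eq_of_mem_Ico_int (ht : StrictMono t) {i k l : ℤ}
    (hk : t k ≤ i ∧ i < t (k + 1)) (hl : t l ≤ i ∧ i < t (l + 1)) : k = l := by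
  rcases lt_trichotomy k l with h | h | h
  · have := ht.monotone (show k + 1 ≤ l by omega)
    omega
  · exact h
  · have := ht.monotone (show l + 1 ≤ k by omega)
    omega

end StrictMonoInt

section Blocks

variable (y : ℤ → ABCD)

/-- The position at which the image of the letter `y k` starts, when every letter `a` is
replaced by a block of length `lval a` and the block of `y 0` starts at `0`. -/
def blockStart (k : ℤ) : ℤ :=
  (∑ j ∈ Finset.range k.toNat, (lval (y j) : ℤ)) -
    ∑ j ∈ Finset.range (-k).toNat, (lval (y (-1 - j)) : ℤ)

@[simp]
lemma blockStart_zero : blockStart y 0 = 0 := by simp [blockStart]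

lemma blockStart_succ (k : ℤ) : blockStart y (k + 1) = blockStart y k + lval (y k) := by
  rcases le_or_gt 0 k with hk | hk
  · rw [blockStart, blockStart, show (k + 1).toNat = k.toNat + 1 by omega,
      show (-k).toNat = 0 by omega, show (-(k + 1)).toNat = 0 by omega, Finset.sum_range_succ,
      show ((k.toNat : ℕ) : ℤ) = k by omega]
    simp
  · rw [blockStart, blockStart, show (k + 1).toNat = 0 by omega, show k.toNat = 0 by omega,
      show (-k).toNat = (-(k + 1)).toNat + 1 by omega, Finset.sum_range_succ,
      show -1 - (((-(k + 1)).toNat : ℕ) : ℤ) = k by omega]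
    simp

lemma blockStart_strictMono : StrictMono (blockStart y) :=
  strictMono_int_of_lt_succ fun k => by
    have := lval_pos (y k)
    rw [blockStart_succ]
    omega

lemma le_blockStart {k : ℤ} (hk : 0 ≤ k) : k ≤ blockStart y k := by
  simpa using (blockStart_strictMono y).sub_le_sub_int hk

lemma blockStart_le {k : ℤ} (hk : k ≤ 0) : blockStart y k ≤ k := by
  have := (blockStart_strictMono y).sub_le_sub_int hk
  simp only [blockStart_zero] at this
  omega

lemma blockStart_le_three_mul {k : ℤ} (hk : 0 ≤ k) : blockStart y k ≤ 3 * k := by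
  induction k, hk using Int.leInduction with
  | base => simp
  | succ n _ ih =>
    have := lval_le_three (y n)
    rw [blockStart_succ]
    omega

lemma blockStart_shiftZ (s k : ℤ) :
    blockStart (shiftZ s y) k = blockStart y (k + s) - blockStart y s := by
  induction k using Int.induction_on with
  | zero => simp
  | succ n ih =>
    rw [blockStart_succ, ih, add_right_comm, blockStart_succ, shiftZ_apply]
    ring
  | pred n ih =>
    have h₁ := blockStart_succ (shiftZ s y) (-n - 1)
    have h₂ := blockStart_succ y (-n - 1 + s)
    rw [sub_add_cancel, shiftZ_apply] at h₁
    rw [show -(n : ℤ) - 1 + s + 1 = -n + s by ring] at h₂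
    omega

def blockOf (i : ℤ) : ℤ := ((blockStart_strictMono y).exists_mem_Ico_int i).choose

lemma blockStart_blockOf_le (i : ℤ) : blockStart y (blockOf y i) ≤ i :=
  ((blockStart_strictMono y).exists_mem_Ico_int i).choose_spec.1

lemma lt_blockStart_blockOf_add_one (i : ℤ) : i < blockStart y (blockOf y i + 1) :=
  ((blockStart_strictMono y).exists_mem_Ico_int i).choose_spec.2

variable {y}

lemma blockOf_eq {i k : ℤ} (h₁ : blockStart y k ≤ i) (h₂ : i < blockStart y (k + 1)) :
    blockOf y i = k :=
  (blockStart_strictMono y).eq_of_mem_Ico_int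
    ⟨blockStart_blockOf_le y i, lt_blockStart_blockOf_add_one y i⟩ ⟨h₁, h₂⟩

lemma blockOf_blockStart_add {k : ℤ} {j : ℕ} (hj : (j : ℤ) < lval (y k)) :
    blockOf y (blockStart y k + j) = k :=
  blockOf_eq (by omega) (by rw [blockStart_succ]; omega)

variable (y)

lemma exists_eq_blockStart_add (i : ℤ) :
    ∃ (k : ℤ) (j : ℕ), (j : ℤ) < lval (y k) ∧ i = blockStart y k + j := by
  have h₁ := blockStart_blockOf_le y i
  have h₂ := lt_blockStart_blockOf_add_one y i
  rw [blockStart_succ] at h₂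
  exact ⟨blockOf y i, (i - blockStart y (blockOf y i)).toNat, by omega, by omega⟩

lemma blockOf_zero : blockOf y 0 = 0 :=
  blockOf_eq (by simp) (by have := lval_pos (y 0); have := blockStart_succ y 0; simp_all)

lemma blockOf_shiftZ (s i : ℤ) : blockOf (shiftZ s y) i = blockOf y (i + blockStart y s) - s := by
  have h₁ := blockStart_blockOf_le y (i + blockStart y s)
  have h₂ := lt_blockStart_blockOf_add_one y (i + blockStart y s)
  apply blockOf_eq
  · rw [blockStart_shiftZ, sub_add_cancel]
    omega
  · rw [blockStart_shiftZ, sub_add_eq_add_sub, sub_add_cancel]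
    omega

lemma natAbs_blockOf_le (i : ℤ) : (blockOf y i).natAbs ≤ i.natAbs := by
  have h₁ := blockStart_blockOf_le y i
  have h₂ := lt_blockStart_blockOf_add_one y i
  rcases le_or_gt 0 (blockOf y i) with hk | hk
  · have := le_blockStart y hk
    omega
  · have := blockStart_le y (show blockOf y i + 1 ≤ 0 by omega)
    omega

end Blocks

/-- The substitution `φ₁` on bi-infinite sequences, with the image of `y 0` starting at `0`
(every image `phiW true a` has length `lval a`). -/
def phiOne (y : ℤ → ABCD) : ℤ → ABCD := fun i =>
  (phiW true (y (blockOf y i))).getD (i - blockStart y (blockOf y i)).toNat A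

/-- The sequence over `{1,3}` whose recoding is `z` (for alternating `z`). -/
def decode (z : ℤ → ABCD) : ℤ → ℕ := fun i => sval (z (blockOf z i))

lemma lval_phiW_getD {a : ABCD} {j : ℕ} (hj : j < lval a) :
    lval ((phiW true a).getD j A) = sval a := by
  cases a <;> simp only [lval] at hj <;> interval_cases j <;> rfl

section Substitution

variable {y : ℤ → ABCD}

lemma phiOne_blockStart_add {k : ℤ} {j : ℕ} (hj : (j : ℤ) < lval (y k)) :
    phiOne y (blockStart y k + j) = (phiW true (y k)).getD j A := by
  simp only [phiOne, blockOf_blockStart_add hj, add_sub_cancel_left, Int.toNat_natCast]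

variable (y)

lemma phiOne_shiftZ (s : ℤ) : phiOne (shiftZ s y) = shiftZ (blockStart y s) (phiOne y) := by
  funext i
  simp only [phiOne, shiftZ_apply, blockOf_shiftZ, blockStart_shiftZ, sub_add_cancel]
  congr 2
  omega

lemma decode_shiftZ (s : ℤ) : decode (shiftZ s y) = shiftZ (blockStart y s) (decode y) := by
  funext i
  simp only [decode, shiftZ_apply, blockOf_shiftZ, sub_add_cancel]

lemma lval_phiOne (i : ℤ) : lval (phiOne y i) = decode y i := by
  obtain ⟨k, j, hj, rfl⟩ := exists_eq_blockStart_add y i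
  rw [phiOne_blockStart_add hj, decode, blockOf_blockStart_add hj]
  exact lval_phiW_getD (by exact_mod_cast hj)

end Substitution

lemma sval_phiW_getD_ne_succ {a : ABCD} {j : ℕ} (hj : j + 1 < lval a) :
    sval ((phiW true a).getD j A) ≠ sval ((phiW true a).getD (j + 1) A) := by
  have : j < 2 := by have := lval_le_three a; omega
  cases a <;> simp only [lval] at hj <;> interval_cases j <;> first | omega | decide

lemma sval_phiW_last_ne_first {a b : ABCD} (hab : sval a ≠ sval b) :
    sval ((phiW true a).getD (lval a - 1) A) ≠ sval ((phiW true b).getD 0 A) := by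
  cases a <;> cases b <;> revert hab <;> decide

namespace Alternating

variable {z : ℤ → ABCD}

lemma shiftZ (hz : Alternating z) (m : ℤ) : Alternating (shiftZ m z) := fun n => by
  simpa [add_right_comm] using hz (n + m)

lemma phiOne (hz : Alternating z) : Alternating (phiOne z) := by
  intro n
  obtain ⟨k, j, hj, rfl⟩ := exists_eq_blockStart_add z n
  rw [phiOne_blockStart_add hj]
  rcases lt_or_eq_of_le (show (j : ℤ) + 1 ≤ lval (z k) by omega) with h | h
  · rw [add_assoc, show (j : ℤ) + 1 = ((j + 1 : ℕ) : ℤ) by push_cast; rfl,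
      phiOne_blockStart_add (by push_cast; omega)]
    exact sval_phiW_getD_ne_succ (by exact_mod_cast h)
  · rw [show blockStart z k + j + 1 = blockStart z (k + 1) + ((0 : ℕ) : ℤ) by
        rw [blockStart_succ]; omega,
      phiOne_blockStart_add (by simpa using lval_pos (z (k + 1))),
      show j = lval (z k) - 1 by omega]
    exact sval_phiW_last_ne_first (hz k)

lemma iterate_phiOne (hz : Alternating z) (n : ℕ) : Alternating (_root_.phiOne^[n] z) := by
  induction n with
  | zero => exact hz
  | succ n ih => exact Function.iterate_succ_apply' _ n z ▸ ih.phiOne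

end Alternating

lemma phiW_getD_ne_D {a : ABCD} (ha : a ≠ D) {j : ℕ} (hj : j < lval a) :
    (phiW true a).getD j A ≠ D := by
  cases a <;> simp only [lval] at hj <;> first | exact absurd rfl ha | interval_cases j <;> decide

lemma phiOne_ne_D {y : ℤ → ABCD} (hy : ∀ i, y i ≠ D) (i : ℤ) : phiOne y i ≠ D := by
  obtain ⟨k, j, hj, rfl⟩ := exists_eq_blockStart_add y i
  rw [phiOne_blockStart_add hj]
  exact phiW_getD_ne_D (hy k) (by exact_mod_cast hj)

lemma phiOne_blockStart_add_one_of_eq_D {y : ℤ → ABCD} {k : ℤ} (hk : y k = D) :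
    phiOne y (blockStart y k + 1) = D := by
  have := phiOne_blockStart_add (y := y) (k := k) (j := 1) (by rw [hk]; decide)
  rwa [hk] at this

lemma HasType1.shiftZ {z : ℤ → ABCD} (h : HasType1 z) (m : ℤ) : HasType1 (shiftZ m z) := by
  obtain ⟨i, hi⟩ := h
  exact ⟨i - m, by simpa [add_right_comm, sub_add_cancel] using hi⟩

lemma hasType1_phiOne_phiOne {z : ℤ → ABCD} (hz : Alternating z) :
    HasType1 (phiOne (phiOne z)) := by
  obtain ⟨k, hk⟩ : ∃ k, z k = B ∨ z k = D := by
    by_contra! h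
    have h₀ := hz 0
    have h₁ := h 0
    have h₂ := h (0 + 1)
    revert h₀ h₁ h₂
    cases z 0 <;> cases z (0 + 1) <;> decide
  have hC : phiOne z (blockStart z k) = C := by
    have := phiOne_blockStart_add (y := z) (k := k) (j := 0) (by simpa using lval_pos (z k))
    rcases hk with hk | hk <;> simpa [hk, phiW] using this
  have h (j : ℕ) (hj : j < 3) := phiOne_blockStart_add (y := phiOne z) (k := blockStart z k)
    (j := j) (by rw [hC]; simp only [lval]; omega)
  exact ⟨blockStart (phiOne z) (blockStart z k), Or.inl ⟨by simpa [hC, phiW] using h 0 (by omega),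
    by simpa [hC, phiW] using h 1 (by omega), by simpa [hC, phiW] using h 2 (by omega)⟩⟩

namespace RunStructure

variable {x : ℤ → ℕ} (r : RunStructure x)

lemma exists_t_eq_of_ne {i : ℤ} (h : x (i - 1) ≠ x i) : ∃ k, r.t k = i := by
  obtain ⟨k, h₁, h₂⟩ := r.mono.exists_mem_Ico_int i
  refine ⟨k, le_antisymm h₁ (not_lt.1 fun hlt => h ?_)⟩
  rw [r.const k (i - 1) (by omega) (by omega), r.const k i h₁ h₂]

lemma ne_at_t (k : ℤ) : x (r.t k - 1) ≠ x (r.t k) := by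
  have h := r.alt (k - 1)
  rw [sub_add_cancel] at h
  rw [r.const (k - 1) _ (by have := r.mono (sub_one_lt k); omega) (by simp)]
  exact h.symm

lemma t_add_one_le {k i : ℤ} (hi : x (i - 1) ≠ x i) (hk : r.t k < i) : r.t (k + 1) ≤ i := by
  obtain ⟨l, rfl⟩ := r.exists_t_eq_of_ne hi
  exact r.mono.monotone (by have := r.mono.lt_iff_lt.1 hk; omega)

lemma le_t_of_lt_t_add_one {k i : ℤ} (hi : x (i - 1) ≠ x i) (hk : i < r.t (k + 1)) : i ≤ r.t k := by
  obtain ⟨l, rfl⟩ := r.exists_t_eq_of_ne hi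
  exact r.mono.monotone (by have := r.mono.lt_iff_lt.1 hk; omega)

/-- Run structures are unique: each `t k` is pinned down by its neighbours through the set of
breaks `{i | x (i - 1) ≠ x i}`, and `t 0` by the normalisation `t 0 ≤ 0 < t 1`. -/
lemma t_eq (r' : RunStructure x) : r.t = r'.t := by
  have zero (s s' : RunStructure x) : s.t 0 ≤ s'.t 0 :=
    s'.le_t_of_lt_t_add_one (s.ne_at_t 0)
      (by rw [zero_add]; linarith [s.start_nonpos, s'.start_pos])
  have succ (s s' : RunStructure x) (k : ℤ) (h : s.t k = s'.t k) : s'.t (k + 1) ≤ s.t (k + 1) :=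
    s'.t_add_one_le (s.ne_at_t _) (h ▸ s.mono (lt_add_one k))
  have pred (s s' : RunStructure x) (k : ℤ) (h : s.t (k + 1) = s'.t (k + 1)) : s.t k ≤ s'.t k :=
    s'.le_t_of_lt_t_add_one (s.ne_at_t k) (h ▸ s.mono (lt_add_one k))
  funext k
  induction k using Int.induction_on with
  | zero => exact le_antisymm (zero r r') (zero r' r)
  | succ n ih => exact le_antisymm (succ r' r n ih.symm) (succ r r' n ih)
  | pred n ih =>
    have ih' : r.t (-n - 1 + 1) = r'.t (-n - 1 + 1) := by rwa [sub_add_cancel]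
    exact le_antisymm (pred r r' _ ih') (pred r' r _ ih'.symm)

end RunStructure

lemma recode_eq_of_isRecoding {x : ℤ → ℕ} {y : ℤ → ABCD} (h : IsRecoding x y) : recode x = y := by
  have hex : ∃ y, IsRecoding x y := ⟨y, h⟩
  obtain ⟨r, hr⟩ := hex.choose_spec
  obtain ⟨r', hr'⟩ := h
  rw [recode, dif_pos hex]
  funext k
  have ht := r.t_eq r'
  refine ABCD.ext_sval_lval ?_ ?_
  · rw [← (hr k).1, ← (hr' k).1, ht]
  · have := (hr k).2.symm.trans (ht ▸ (hr' k).2)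
    exact_mod_cast this

lemma delta_eq_of_isDelta {x d : ℤ → ℕ} (h : IsDelta x d) : delta x = d := by
  have hex : ∃ d, IsDelta x d := ⟨d, h⟩
  obtain ⟨r, hr⟩ := hex.choose_spec
  obtain ⟨r', hr'⟩ := h
  rw [delta, dif_pos hex]
  funext k
  have := (hr k).trans (r.t_eq r' ▸ (hr' k).symm)
  exact_mod_cast this

section Decode

variable {z : ℤ → ABCD}

lemma decode_eq_of_mem_block {i k : ℤ} (h₁ : blockStart z k ≤ i) (h₂ : i < blockStart z (k + 1)) :
    decode z i = sval (z k) := by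
  rw [decode, blockOf_eq h₁ h₂]

def decodeRunStructure (hz : Alternating z) (m : ℤ) :
    RunStructure (shiftZ m (decode z)) where
  t k := blockStart z (k + blockOf z m) - m
  mono a b hab := by
    have := blockStart_strictMono z (show a + blockOf z m < b + blockOf z m by omega)
    dsimp only
    omega
  start_nonpos := by
    have := blockStart_blockOf_le z m
    simp only [zero_add]
    omega
  start_pos := by
    have := lt_blockStart_blockOf_add_one z m
    rw [add_comm 1]
    omega
  const k i h₁ h₂ := by
    rw [add_right_comm, blockStart_succ] at h₂
    simp only [shiftZ_apply, sub_add_cancel]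
    rw [decode_eq_of_mem_block (k := k + blockOf z m) (by omega) (by rw [blockStart_succ]; omega),
      decode_eq_of_mem_block le_rfl (blockStart_strictMono z (lt_add_one _))]
  alt k := by
    simp only [shiftZ_apply, sub_add_cancel, add_right_comm k 1]
    rw [decode_eq_of_mem_block le_rfl (blockStart_strictMono z (lt_add_one _)),
      decode_eq_of_mem_block le_rfl (blockStart_strictMono z (lt_add_one _))]
    exact (hz _).symm

lemma decodeRunStructure_t_succ_sub (hz : Alternating z) (m k : ℤ) :
    (decodeRunStructure hz m).t (k + 1) - (decodeRunStructure hz m).t k =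
      lval (z (k + blockOf z m)) := by
  simp only [decodeRunStructure, add_right_comm k 1, blockStart_succ]
  ring

lemma recode_shiftZ_decode (hz : Alternating z) (m : ℤ) :
    recode (shiftZ m (decode z)) = shiftZ (blockOf z m) z :=
  recode_eq_of_isRecoding ⟨decodeRunStructure hz m, fun k => ⟨by
    simp [decodeRunStructure, decode_eq_of_mem_block le_rfl
      (blockStart_strictMono z (lt_add_one _))], decodeRunStructure_t_succ_sub hz m k⟩⟩

lemma recode_decode (hz : Alternating z) : recode (decode z) = z := by
  simpa [blockOf_zero] using recode_shiftZ_decode hz 0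

lemma delta_shiftZ_decode (hz : Alternating z) (m : ℤ) :
    delta (shiftZ m (decode z)) = shiftZ (blockOf z m) fun i => lval (z i) :=
  delta_eq_of_isDelta
    ⟨decodeRunStructure hz m, fun k => (decodeRunStructure_t_succ_sub hz m k).symm⟩

lemma delta_shiftZ_decode_phiOne (hz : Alternating z) (m : ℤ) :
    delta (shiftZ m (decode (phiOne z))) = shiftZ (blockOf (phiOne z) m) (decode z) := by
  rw [delta_shiftZ_decode hz.phiOne]
  simp only [lval_phiOne]

lemma exists_iterate_delta_shiftZ_decode (hz : Alternating z) (n : ℕ) (m : ℤ) :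
    ∃ K, delta^[n] (shiftZ m (decode (phiOne^[n] z))) = shiftZ K (decode z) := by
  induction n generalizing m with
  | zero => exact ⟨m, rfl⟩
  | succ n ih =>
    obtain ⟨K, hK⟩ := ih (blockOf (phiOne (phiOne^[n] z)) m)
    refine ⟨K, ?_⟩
    rw [Function.iterate_succ_apply, Function.iterate_succ_apply',
      delta_shiftZ_decode_phiOne (hz.iterate_phiOne n), hK]

end Decode

lemma mem_Yset_of_forall_eq_shiftZ_iterate {z : ℤ → ABCD}
    (h : ∀ n, ∃ m v, Alternating v ∧ z = shiftZ m (phiOne^[n] v)) :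
    z ∈ Yset fun _ => true := by
  have hz : Alternating z := by
    obtain ⟨m, v, hv, rfl⟩ := h 0
    exact hv.shiftZ m
  have hδ (n : ℕ) : ∃ K v, Alternating v ∧
      delta^[n] (decode z) = shiftZ K (decode (phiOne (phiOne v))) := by
    obtain ⟨m, v, hv, rfl⟩ := h (n + 2)
    rw [Function.iterate_add_apply, decode_shiftZ]
    obtain ⟨K, hK⟩ := exists_iterate_delta_shiftZ_decode hv.phiOne.phiOne n _
    exact ⟨K, v, hv, hK⟩
  refine ⟨decode z, ⟨fun n i => ?_, funext fun n => ?_⟩, recode_decode hz⟩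
  · obtain ⟨K, v, -, hK⟩ := hδ n
    rw [hK]
    exact sval_eq_one_or_three _
  · obtain ⟨K, v, hv, hK⟩ := hδ n
    simp only [TypesX, typeOf, hK, recode_shiftZ_decode hv.phiOne.phiOne]
    exact decide_eq_true ((hasType1_phiOne_phiOne hv).shiftZ _)

lemma continuous_of_forall_window {α β : Type*} [TopologicalSpace α] [DiscreteTopology α]
    [TopologicalSpace β] [DiscreteTopology β] {F : (ℤ → α) → ℤ → β}
    (hF : ∀ i, ∃ N : ℕ, ∀ y y' : ℤ → α, (∀ j : ℤ, j.natAbs ≤ N → y j = y' j) → F y i = F y' i) :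
    Continuous F := by
  refine continuous_pi fun i => ?_
  obtain ⟨N, hN⟩ := hF i
  refine (IsLocallyConstant.iff_continuous _).1 <|
    (IsLocallyConstant.iff_eventually_eq _).2 fun y => ?_
  have hwin : ∀ᶠ y' in 𝓝 y, ∀ j ∈ Finset.Icc (-(N : ℤ)) N, y' j = y j :=
    (Filter.eventually_all_finset _).2 fun j _ => (IsLocallyConstant.iff_eventually_eq _).1
      ((IsLocallyConstant.iff_continuous _).2 (continuous_apply j)) y
  filter_upwards [hwin] with y' hy'
  exact hN y' y fun j hj => hy' j (Finset.mem_Icc.2 ⟨by omega, by omega⟩)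

lemma blockStart_congr {y y' : ℤ → ABCD} {N : ℕ} (h : ∀ j : ℤ, j.natAbs ≤ N → y j = y' j)
    {k : ℤ} (hk₁ : -(N : ℤ) ≤ k) (hk₂ : k ≤ N + 1) : blockStart y k = blockStart y' k := by
  rw [blockStart, blockStart]
  congr 1 <;> refine Finset.sum_congr rfl fun j hj => ?_ <;> rw [Finset.mem_range] at hj <;>
    rw [h _ (by omega)]

lemma phiOne_congr {y y' : ℤ → ABCD} {i : ℤ} (h : ∀ j : ℤ, j.natAbs ≤ i.natAbs → y j = y' j) :
    phiOne y i = phiOne y' i := by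
  have hk := natAbs_blockOf_le y i
  have hs₀ := blockStart_congr h (k := blockOf y i) (by omega) (by omega)
  have hs₁ := blockStart_congr h (k := blockOf y i + 1) (by omega) (by omega)
  have hb : blockOf y' i = blockOf y i := blockOf_eq
    (hs₀ ▸ blockStart_blockOf_le y i) (hs₁ ▸ lt_blockStart_blockOf_add_one y i)
  simp only [phiOne, hb, hs₀, h _ hk]

lemma continuous_phiOne : Continuous phiOne :=
  continuous_of_forall_window fun i => ⟨i.natAbs, fun _ _ h => phiOne_congr h⟩

lemma continuous_shiftZ {α : Type*} [TopologicalSpace α] (m : ℤ) :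
    Continuous (shiftZ m : (ℤ → α) → ℤ → α) :=
  continuous_pi fun n => continuous_apply (n + m)

def phiImageShifts (V : Set (ℤ → ABCD)) (n : ℕ) : Set (ℤ → ABCD) :=
  {z | ∃ m, ∃ v ∈ V, z = shiftZ m (phiOne^[n] v)}

def phiLimitSet (V : Set (ℤ → ABCD)) : Set (ℤ → ABCD) := ⋂ n, phiImageShifts V n

lemma exists_shiftZ_iterate_phiOne_eq (n : ℕ) (m : ℤ) (v : ℤ → ABCD) :
    ∃ k m', 0 ≤ m' ∧ m' < 3 ^ n ∧
      shiftZ m (phiOne^[n] v) = shiftZ m' (phiOne^[n] (shiftZ k v)) := by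
  induction n generalizing m with
  | zero => exact ⟨m, 0, le_rfl, by norm_num, by simp⟩
  | succ n ih =>
    set u := phiOne^[n] v
    obtain ⟨k, j, hj, rfl⟩ := exists_eq_blockStart_add u m
    obtain ⟨k', m', h₀, h₁, hk⟩ := ih k
    set u' := phiOne^[n] (shiftZ k' v)
    have := blockStart_le_three_mul u' h₀
    have := le_blockStart u' h₀
    have := lval_le_three (u k)
    refine ⟨k', j + blockStart u' m', by omega, by rw [pow_succ]; omega, ?_⟩
    calc shiftZ (blockStart u k + j) (phiOne^[n + 1] v)
        = shiftZ j (phiOne (shiftZ k u)) := by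
          rw [Function.iterate_succ_apply', phiOne_shiftZ, shiftZ_shiftZ, add_comm]
      _ = shiftZ (j + blockStart u' m') (phiOne^[n + 1] (shiftZ k' v)) := by
          rw [hk, phiOne_shiftZ, shiftZ_shiftZ, Function.iterate_succ_apply']

structure IsPhiOneSubshift (V : Set (ℤ → ABCD)) : Prop where
  isClosed : IsClosed V
  shiftZ_mem : ∀ v ∈ V, ∀ k, shiftZ k v ∈ V
  mapsTo_phiOne : Set.MapsTo phiOne V V

namespace IsPhiOneSubshift

variable {V : Set (ℤ → ABCD)}

lemma phiImageShifts_eq_biUnion (hV : IsPhiOneSubshift V) (n : ℕ) :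
    phiImageShifts V n = ⋃ m ∈ Finset.range (3 ^ n), shiftZ (m : ℤ) '' (phiOne^[n] '' V) := by
  ext z
  simp only [phiImageShifts, Set.mem_iUnion, Set.mem_image, Finset.mem_range,
    exists_exists_and_eq_and, exists_prop]
  constructor
  · rintro ⟨m, v, hv, rfl⟩
    obtain ⟨k, m', h₀, h₁, h⟩ := exists_shiftZ_iterate_phiOne_eq n m v
    have hm' : ((m'.toNat : ℕ) : ℤ) < (3 ^ n : ℕ) := by push_cast; omega
    refine ⟨m'.toNat, by exact_mod_cast hm', shiftZ k v, hV.shiftZ_mem v hv k, ?_⟩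
    rw [h]
    congr
    omega
  · rintro ⟨m, -, v, hv, rfl⟩
    exact ⟨m, v, hv, rfl⟩

lemma isClosed_phiImageShifts (hV : IsPhiOneSubshift V) (n : ℕ) :
    IsClosed (phiImageShifts V n) := by
  rw [hV.phiImageShifts_eq_biUnion]
  exact Set.Finite.isClosed_biUnion (Finset.finite_toSet _) fun m _ =>
    ((hV.isClosed.isCompact.image (continuous_phiOne.iterate n)).image
      (continuous_shiftZ _)).isClosed

lemma phiImageShifts_succ_subset (hV : IsPhiOneSubshift V) (n : ℕ) :
    phiImageShifts V (n + 1) ⊆ phiImageShifts V n := by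
  rintro _ ⟨m, v, hv, rfl⟩
  exact ⟨m, phiOne v, hV.mapsTo_phiOne hv, by rw [Function.iterate_succ_apply]⟩

lemma isClosed_phiLimitSet (hV : IsPhiOneSubshift V) : IsClosed (phiLimitSet V) :=
  isClosed_iInter hV.isClosed_phiImageShifts

lemma phiLimitSet_inter_nonempty (hV : IsPhiOneSubshift V) {K : Set (ℤ → ABCD)}
    (hK : IsClosed K) (h : ∀ n, (phiImageShifts V n ∩ K).Nonempty) :
    (phiLimitSet V ∩ K).Nonempty := by
  rw [phiLimitSet, Set.iInter_inter]
  exact IsCompact.nonempty_iInter_of_sequence_nonempty_isCompact_isClosed _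
    (fun n => Set.inter_subset_inter_left _ (hV.phiImageShifts_succ_subset n)) h
    ((hV.isClosed_phiImageShifts 0).inter hK).isCompact
    fun n => (hV.isClosed_phiImageShifts n).inter hK

end IsPhiOneSubshift

lemma image_shift_phiLimitSet (V : Set (ℤ → ABCD)) : shift '' phiLimitSet V = phiLimitSet V :=
  image_shift_eq_of_shiftZ_mem fun z hz m => Set.mem_iInter.2 fun n => by
    obtain ⟨m', v, hv, rfl⟩ := Set.mem_iInter.1 hz n
    exact ⟨m + m', v, hv, shiftZ_shiftZ _ _ _⟩

lemma phiLimitSet_subset_Yset {V : Set (ℤ → ABCD)} (hV : ∀ v ∈ V, Alternating v) :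
    phiLimitSet V ⊆ Yset fun _ => true := fun z hz =>
  mem_Yset_of_forall_eq_shiftZ_iterate fun n => by
    obtain ⟨m, v, hv, rfl⟩ := Set.mem_iInter.1 hz n
    exact ⟨m, v, hV v hv, rfl⟩

lemma isClosed_setOf_alternating : IsClosed {v : ℤ → ABCD | Alternating v} := by
  simp only [Alternating, Set.ofPred_forall]
  exact isClosed_iInter fun n =>
    (isClosed_discrete {p : ABCD × ABCD | sval p.1 ≠ sval p.2}).preimage
      (f := fun v : ℤ → ABCD => (v n, v (n + 1))) (by fun_prop)

lemma isPhiOneSubshift_alternating : IsPhiOneSubshift {v | Alternating v} where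
  isClosed := isClosed_setOf_alternating
  shiftZ_mem _ hv k := hv.shiftZ k
  mapsTo_phiOne _ hv := hv.phiOne

def alternatingNoD : Set (ℤ → ABCD) := {v | Alternating v ∧ ∀ i, v i ≠ D}

lemma isPhiOneSubshift_alternatingNoD : IsPhiOneSubshift alternatingNoD where
  isClosed := by
    show IsClosed ({v | Alternating v} ∩ {v | ∀ i, v i ≠ D})
    refine isClosed_setOf_alternating.inter ?_
    simp only [Set.ofPred_forall]
    exact isClosed_iInter fun i => (isClosed_discrete {a : ABCD | a ≠ D}).preimage
      (f := fun v : ℤ → ABCD => v i) (continuous_apply i)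
  shiftZ_mem _ hv k := ⟨hv.1.shiftZ k, fun i => hv.2 (i + k)⟩
  mapsTo_phiOne _ hv := ⟨hv.1.phiOne, phiOne_ne_D hv.2⟩

lemma alternating_ite_even {a b : ABCD} (hab : sval a ≠ sval b) :
    Alternating fun i => if Even i then a else b := by
  intro n
  by_cases hn : Even n <;> simp only [Int.even_add_one, hn, if_true, if_false, not_true,
    not_false_eq_true, hab, hab.symm, ne_eq]

lemma phiLimitSet_alternatingNoD_nonempty : (phiLimitSet alternatingNoD).Nonempty := by
  have hv : (fun i : ℤ => if Even i then A else B) ∈ alternatingNoD :=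
    ⟨alternating_ite_even (by decide), fun i => by dsimp only; split_ifs <;> decide⟩
  exact (isPhiOneSubshift_alternatingNoD.phiLimitSet_inter_nonempty isClosed_univ
    fun n => ⟨_, ⟨0, _, hv, rfl⟩, trivial⟩).mono Set.inter_subset_left

lemma apply_zero_ne_D_of_mem_phiLimitSet {z : ℤ → ABCD} (hz : z ∈ phiLimitSet alternatingNoD) :
    z 0 ≠ D := by
  obtain ⟨m, v, hv, rfl⟩ := Set.mem_iInter.1 hz 0
  exact hv.2 _

lemma exists_mem_phiLimitSet_apply_zero_eq_D :
    ∃ z ∈ phiLimitSet {v | Alternating v}, z 0 = D := by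
  set v : ℤ → ABCD := fun i => if Even i then D else A
  have hD (n : ℕ) : ∃ m, (phiOne^[n] v) m = D := by
    induction n with
    | zero => exact ⟨0, by simp [v]⟩
    | succ n ih =>
      obtain ⟨m, hm⟩ := ih
      refine ⟨blockStart (phiOne^[n] v) m + 1, ?_⟩
      rw [Function.iterate_succ_apply']
      exact phiOne_blockStart_add_one_of_eq_D hm
  exact isPhiOneSubshift_alternating.phiLimitSet_inter_nonempty (K := {z | z 0 = D})
    (isClosed_eq (continuous_apply 0) continuous_const) fun n =>
      let ⟨m, hm⟩ := hD n
      ⟨shiftZ m (phiOne^[n] v), ⟨m, v, alternating_ite_even (by decide), rfl⟩, by simpa using hm⟩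

/-- Non-minimality for `τ = 1^∞`.
The subshift `(Y_{1^∞}, S)` is not minimal. -/
theorem stmt18 : ¬ ShiftMinimal (Yset fun _ => true) := by
  intro hmin
  have hW := hmin _ (phiLimitSet_subset_Yset fun _ hv => hv.1)
    phiLimitSet_alternatingNoD_nonempty isPhiOneSubshift_alternatingNoD.isClosed_phiLimitSet
    (image_shift_phiLimitSet _)
  obtain ⟨z, hz, hzD⟩ := exists_mem_phiLimitSet_apply_zero_eq_D
  have hzW : z ∈ phiLimitSet alternatingNoD := hW ▸ phiLimitSet_subset_Yset (fun _ hv => hv) hz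
  exact apply_zero_ne_D_of_mem_phiLimitSet hzW hzD
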